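/- arXiv:2602.09594 — 5 statements merged into one kernel-verified Lean document; each statement's English description precedes it below -/
import Mathlib

section
/- The set Θ ⊆ ℂ × ℂ consisting of all pairs (γ₋, γ₊) for which there exist q, b ∈ ℂ with cos(πq/2 − b) ≠ 0 and cos(πq/2 + b) ≠ 0 satisfying the three equations sin(πq)·cos(2b) = −πq, πq·tan(πq/2 − b) = i·γ₋, and πq·tan(πq/2 + b) = i·γ₊, has Lebesgue measure zero in ℂ × ℂ ≅ ℝ⁴. -/
/-!
Θ lies in the image, under the map `(q, b) ↦ (γ₋, γ₊)` obtained by solving the two boundary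
conditions, of pairs `(q, b)` with `Λ = 0`. That map is holomorphic where both cosines are
nonzero, so it sends null sets to null sets. The set `Λ = 0` is null by Fubini: for `q ≠ 0`
its `b`-slice is the zero set of an entire function that is not identically zero.
-/

open Complex MeasureTheory

/-- The exceptional set of admittance parameter pairs `(γ₋, γ₊)` on which the
rectangular-room eigenfunction basis may fail to be complete. -/
def Theta : Set (ℂ × ℂ) :=
  {p : ℂ × ℂ | ∃ q b : ℂ,
    Complex.cos (↑Real.pi * q / 2 - b) ≠ 0 ∧
    Complex.cos (↑Real.pi * q / 2 + b) ≠ 0 ∧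
    Complex.sin (↑Real.pi * q) * Complex.cos (2 * b) = -(↑Real.pi * q) ∧
    ↑Real.pi * q * Complex.tan (↑Real.pi * q / 2 - b) = Complex.I * p.1 ∧
    ↑Real.pi * q * Complex.tan (↑Real.pi * q / 2 + b) = Complex.I * p.2}

open Set

theorem AnalyticOnNhd.ae_ne_of_ne {𝕜 E : Type*} [NontriviallyNormedField 𝕜]
    [PreconnectedSpace 𝕜] [SecondCountableTopology 𝕜] [MeasurableSpace 𝕜] {μ : Measure 𝕜}
    [NullSingletonClass μ] [NormedAddCommGroup E] [NormedSpace 𝕜 E] {f g : 𝕜 → E}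
    (hf : AnalyticOnNhd 𝕜 f univ) (hg : AnalyticOnNhd 𝕜 g univ) {z₀ : 𝕜} (h : f z₀ ≠ g z₀) :
    ∀ᵐ z ∂μ, f z ≠ g z := by
  have hcodiscrete := (hf.eqOn_or_eventually_ne_of_preconnected hg isPreconnected_univ).resolve_left
    fun hfg ↦ h (hfg (mem_univ z₀))
  exact Measure.restrict_univ (μ := μ) ▸
    ae_restrict_le_codiscreteWithin MeasurableSet.univ hcodiscrete

/-- The parameters `(q, b)` with `Λ = 0`. -/
def lambdaZeroSet : Set (ℂ × ℂ) :=
  {p | sin (Real.pi * p.1) * cos (2 * p.2) = -(Real.pi * p.1)}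

theorem volume_lambdaZeroSet : volume lambdaZeroSet = 0 := by
  have hmeas : MeasurableSet lambdaZeroSetᶜ :=
    (isClosed_eq (by fun_prop) (by fun_prop)).measurableSet.compl
  rw [measure_eq_zero_iff_ae_notMem, Measure.volume_eq_prod, Measure.ae_prod_iff_ae_ae hmeas]
  filter_upwards [Measure.ae_ne volume 0] with q hq
  -- at `b = π / 4` the left-hand side vanishes while `-(π q)` does not
  refine AnalyticOnNhd.ae_ne_of_ne (z₀ := Real.pi / 4)
    (fun _ _ ↦ by fun_prop) (fun _ _ ↦ by fun_prop) ?_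
  rw [show 2 * ((Real.pi : ℂ) / 4) = Real.pi / 2 by ring, cos_pi_div_two, mul_zero, ne_comm,
    neg_ne_zero]
  exact mul_ne_zero (ofReal_ne_zero.2 Real.pi_ne_zero) hq

def admittanceDomain : Set (ℂ × ℂ) :=
  {p | cos (Real.pi * p.1 / 2 - p.2) ≠ 0 ∧ cos (Real.pi * p.1 / 2 + p.2) ≠ 0}

/-- `(γ₋, γ₊)` as a function of `(q, b)`, solving `π q tan (π q / 2 ∓ b) = i γ∓`. -/
noncomputable def admittances (p : ℂ × ℂ) : ℂ × ℂ :=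
  (-I * (Real.pi * p.1 * tan (Real.pi * p.1 / 2 - p.2)),
   -I * (Real.pi * p.1 * tan (Real.pi * p.1 / 2 + p.2)))

theorem differentiableOn_admittances : DifferentiableOn ℂ admittances admittanceDomain := by
  rintro p ⟨hminus, hplus⟩
  have htan_minus := (differentiableAt_tan.2 hminus).comp p
    (by fun_prop : DifferentiableAt ℂ (fun p : ℂ × ℂ ↦ Real.pi * p.1 / 2 - p.2) p)
  have htan_plus := (differentiableAt_tan.2 hplus).comp p
    (by fun_prop : DifferentiableAt ℂ (fun p : ℂ × ℂ ↦ Real.pi * p.1 / 2 + p.2) p)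
  have hq : DifferentiableAt ℂ (fun p : ℂ × ℂ ↦ (Real.pi : ℂ) * p.1) p := by fun_prop
  exact ((differentiableAt_const _).mul (hq.mul htan_minus)).prodMk
    ((differentiableAt_const _).mul (hq.mul htan_plus)) |>.differentiableWithinAt

theorem theta_subset_image_admittances :
    Theta ⊆ admittances '' (lambdaZeroSet ∩ admittanceDomain) := by
  rintro γ ⟨q, b, hminus, hplus, hΛ, hγminus, hγplus⟩
  refine ⟨(q, b), ⟨hΛ, hminus, hplus⟩, Prod.ext ?_ ?_⟩
  · simp only [admittances, hγminus, ← mul_assoc, neg_mul, I_mul_I, neg_neg, one_mul]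
  · simp only [admittances, hγplus, ← mul_assoc, neg_mul, I_mul_I, neg_neg, one_mul]

theorem theta_measure_zero : volume Theta = 0 := by
  have : (volume : Measure (ℂ × ℂ)).IsAddHaarMeasure := Measure.prod.instIsAddHaarMeasure _ _
  refine measure_mono_null theta_subset_image_admittances ?_
  exact addHaar_image_eq_zero_of_differentiableOn_of_addHaar_eq_zero _
    (differentiableOn_admittances.restrictScalars ℝ |>.mono inter_subset_right)
    (measure_mono_null inter_subset_left volume_lambdaZeroSet)
end

section
/- For any fixed γ₋, γ₊ ∈ ℂ there exists m₀ ∈ ℕ such that for every natural number m ≥ m₀ and every q ∈ ℂ with |q| = m + 1/2, one has |(γ₋ + γ₊)·(πq)·cos(πq)| < |((πq)² + γ₋γ₊)·sin(πq)|. -/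
/-!
Write `z = πq = x + iy`, so that `‖sin z‖² = sin² x + sinh² y` and `‖cos z‖² = cos² x + sinh² y`.
On the circle `‖z‖ = π(m + 1/2)` either `|y| ≥ 1`, so `sinh² y ≥ 1`, or `|x|` lies within `1` of
the odd multiple `π(m + 1/2)` of `π/2`, so `sin² x ≥ 1/4`. In both cases `‖sin z‖ ≥ 1/2` and
`‖cos z‖ ≤ 2‖sin z‖`, hence the left-hand side is at most `2‖γ₋ + γ₊‖ ‖z‖ ‖sin z‖`, while the
right-hand side is at least `(‖z‖² - ‖γ₋γ₊‖) ‖sin z‖`, which wins for large `m`.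
-/

open Real

namespace Complex

theorem sq_norm_sin (z : ℂ) : ‖sin z‖ ^ 2 = Real.sin z.re ^ 2 + Real.sinh z.im ^ 2 := by
  rw [Complex.sq_norm, sin_eq, ← ofReal_sin, ← ofReal_cosh, ← ofReal_cos, ← ofReal_sinh,
    ← ofReal_mul, ← ofReal_mul, normSq_add_mul_I]
  nlinarith [Real.cosh_sq z.im, Real.sin_sq_add_cos_sq z.re]

theorem sq_norm_cos (z : ℂ) : ‖cos z‖ ^ 2 = Real.cos z.re ^ 2 + Real.sinh z.im ^ 2 := by
  rw [Complex.sq_norm, cos_eq, ← ofReal_sin, ← ofReal_cosh, ← ofReal_cos, ← ofReal_sinh,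
    ← ofReal_mul, ← ofReal_mul, sub_eq_add_neg, ← neg_mul, ← ofReal_neg, normSq_add_mul_I]
  nlinarith [Real.cosh_sq z.im, Real.sin_sq_add_cos_sq z.re]

end Complex

theorem Real.sin_sq_eq_cos_sq_sub (x : ℝ) (n : ℤ) :
    sin x ^ 2 = cos (x - π * (n + 1 / 2)) ^ 2 := by
  have h : x = (x - π * (n + 1 / 2) + π / 2) + n * π := by ring
  conv_lhs => rw [h]
  rw [sin_add_int_mul_pi, sin_add_pi_div_two, mul_pow, ← sq_abs ((-1 : ℝ) ^ n), abs_neg_one_zpow,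
    one_pow, one_mul]

theorem Real.quarter_le_cos_sq_of_abs_le_one {θ : ℝ} (h : |θ| ≤ 1) : 1 / 4 ≤ cos θ ^ 2 := by
  have hθ : θ ^ 2 ≤ 1 := by nlinarith [sq_abs θ, abs_nonneg θ]
  nlinarith [one_sub_sq_div_two_le_cos (x := θ)]

theorem mul_add_lt_sq_of_le {a b R : ℝ} (h : |a| + |b| + 1 ≤ R) : a * R + b < R ^ 2 := by
  nlinarith [le_abs_self a, le_abs_self b, abs_nonneg a, abs_nonneg b]

theorem norm_sq_sub_norm_le_norm_sq_add {𝕜 : Type*} [NormedDivisionRing 𝕜] (z c : 𝕜) :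
    ‖z‖ ^ 2 - ‖c‖ ≤ ‖z ^ 2 + c‖ := by
  have h := norm_sub_norm_le (z ^ 2) (-c)
  rwa [norm_pow, norm_neg, sub_neg_eq_add] at h

theorem quarter_le_sin_sq_re_or_one_le_sinh_sq_im_of_norm_eq {z : ℂ} {m : ℕ}
    (hz : ‖z‖ = π * (m + 1 / 2)) : 1 / 4 ≤ Real.sin z.re ^ 2 ∨ 1 ≤ Real.sinh z.im ^ 2 := by
  rcases le_or_gt 1 |z.im| with hy | hy
  · right
    have := Real.self_le_sinh_iff.mpr (abs_nonneg z.im)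
    rw [← sq_abs (sinh _), abs_sinh]
    nlinarith
  · left
    have hR : 1 ≤ π * (m + 1 / 2) := by
      nlinarith [pi_gt_three, mul_nonneg pi_pos.le m.cast_nonneg]
    set R := π * (m + 1 / 2)
    have hxy : z.re ^ 2 + z.im ^ 2 = R ^ 2 := by
      rw [← hz, Complex.sq_norm, Complex.normSq_apply]; ring
    have hx : |(|z.re| - R)| ≤ 1 := by
      rw [abs_le]
      constructor <;> nlinarith [sq_abs z.re, sq_abs z.im, abs_nonneg z.re, abs_nonneg z.im]
    have hsin_abs : Real.sin z.re ^ 2 = Real.sin |z.re| ^ 2 := by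
      rcases abs_choice z.re with h | h <;> simp [h]
    rw [hsin_abs, sin_sq_eq_cos_sq_sub _ m, Int.cast_natCast]
    exact quarter_le_cos_sq_of_abs_le_one hx

namespace Complex

variable {z : ℂ}

theorem half_le_norm_sin (h : 1 / 4 ≤ Real.sin z.re ^ 2 ∨ 1 ≤ Real.sinh z.im ^ 2) :
    1 / 2 ≤ ‖sin z‖ := by
  rw [← pow_le_pow_iff_left₀ (by norm_num) (norm_nonneg _) two_ne_zero, sq_norm_sin]
  rcases h with h | h <;> nlinarith [sq_nonneg (Real.sin z.re), sq_nonneg (Real.sinh z.im)]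

theorem norm_cos_le_two_mul_norm_sin (h : 1 / 4 ≤ Real.sin z.re ^ 2 ∨ 1 ≤ Real.sinh z.im ^ 2) :
    ‖cos z‖ ≤ 2 * ‖sin z‖ := by
  rw [← pow_le_pow_iff_left₀ (norm_nonneg _) (by positivity) two_ne_zero, mul_pow,
    sq_norm_sin, sq_norm_cos]
  rcases h with h | h <;>
    nlinarith [Real.cos_sq_le_one z.re, sq_nonneg (Real.sin z.re), sq_nonneg (Real.sinh z.im)]

end Complex

/-- Rouché domination hypothesis: for all sufficiently large `m`, on the circle
`|q| = m + 1/2` the term `(γ₋ + γ₊)·(πq)·cos(πq)` is strictly dominated by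
`((πq)² + γ₋γ₊)·sin(πq)`. -/
theorem rouche_domination (γm γp : ℂ) :
    ∃ m₀ : ℕ, ∀ m : ℕ, m₀ ≤ m → ∀ q : ℂ, ‖q‖ = (m : ℝ) + 1 / 2 →
      ‖(γm + γp) * (↑Real.pi * q) * Complex.cos (↑Real.pi * q)‖ <
        ‖((↑Real.pi * q) ^ 2 + γm * γp) * Complex.sin (↑Real.pi * q)‖ := by
  set B := ‖γm + γp‖
  set A := ‖γm * γp‖
  refine ⟨⌈|2 * B| + |A| + 1⌉₊, fun m hm q hq => ?_⟩
  set z : ℂ := π * q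
  have hz : ‖z‖ = π * (m + 1 / 2) := by
    rw [norm_mul, Complex.norm_real, norm_of_nonneg pi_pos.le, hq]
  have hz_large : |2 * B| + |A| + 1 ≤ ‖z‖ := by
    have hm' := Nat.ceil_le.mp hm
    rw [hz]; nlinarith [pi_gt_three, m.cast_nonneg (α := ℝ)]
  have hsz := quarter_le_sin_sq_re_or_one_le_sinh_sq_im_of_norm_eq hz
  have hsin_pos : 0 < ‖Complex.sin z‖ := by linarith [Complex.half_le_norm_sin hsz]
  calc ‖(γm + γp) * z * Complex.cos z‖ = B * ‖z‖ * ‖Complex.cos z‖ := by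
        simp only [norm_mul, B]
    _ ≤ B * ‖z‖ * (2 * ‖Complex.sin z‖) := by
      gcongr; exact Complex.norm_cos_le_two_mul_norm_sin hsz
    _ < (‖z‖ ^ 2 - A) * ‖Complex.sin z‖ := by
      rw [← mul_assoc]
      gcongr
      linarith [mul_add_lt_sq_of_le hz_large]
    _ ≤ ‖z ^ 2 + γm * γp‖ * ‖Complex.sin z‖ := by
      gcongr; exact norm_sq_sub_norm_le_norm_sq_add z _
    _ = ‖(z ^ 2 + γm * γp) * Complex.sin z‖ := (norm_mul _ _).symm
end

section
/- For every natural number m and every z ∈ ℂ with |z| = m + 1/2, one has |cos(πz)| ≤ 2·|sin(πz)| (equivalently, |cot(πz)| ≤ 2, noting that sin(πz) ≠ 0 on such circles). -/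
/-!
Writing `πz = x + iy`, one has `|sin πz|² = sin² x + sinh² y` and `|cos πz|² = cos² x + sinh² y`,
so the bound amounts to `1 ≤ 5 sin² x + 3 sinh² y`. Off the strip `|Im z| < 1/4` the `sinh` term
alone suffices, since `sinh² t ≥ t²`. Inside the strip the circle `|z| = m + 1/2` forces
`m + 1/4 ≤ |Re z| ≤ m + 1/2`, and Jordan's inequality then gives `|sin x| ≥ 1/2`.
-/

open Real

namespace Complex

theorem normSq_sin (z : ℂ) : normSq (sin z) = Real.sin z.re ^ 2 + Real.sinh z.im ^ 2 := by
  rw [sin_eq, ← ofReal_sin, ← ofReal_cos, ← ofReal_sinh, ← ofReal_cosh, ← ofReal_mul,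
    ← ofReal_mul, normSq_add_mul_I]
  linear_combination Real.sin z.re ^ 2 * Real.cosh_sq z.im +
    Real.sinh z.im ^ 2 * Real.sin_sq_add_cos_sq z.re

theorem normSq_cos (z : ℂ) : normSq (cos z) = Real.cos z.re ^ 2 + Real.sinh z.im ^ 2 := by
  rw [cos_eq, sub_eq_add_neg, ← neg_mul, ← ofReal_sin, ← ofReal_cos, ← ofReal_sinh,
    ← ofReal_cosh, ← ofReal_mul, ← ofReal_mul, ← ofReal_neg, normSq_add_mul_I]
  linear_combination Real.cos z.re ^ 2 * Real.cosh_sq z.im +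
    Real.sinh z.im ^ 2 * Real.sin_sq_add_cos_sq z.re

theorem norm_cos_le_two_mul_norm_sin_iff (z : ℂ) :
    ‖cos z‖ ≤ 2 * ‖sin z‖ ↔ 1 ≤ 5 * Real.sin z.re ^ 2 + 3 * Real.sinh z.im ^ 2 := by
  rw [← pow_le_pow_iff_left₀ (norm_nonneg _) (by positivity) two_ne_zero, mul_pow,
    Complex.sq_norm, Complex.sq_norm, normSq_cos, normSq_sin, Real.cos_sq']
  constructor <;> intro h <;> linarith

end Complex

namespace Real

theorem sq_le_sinh_sq (x : ℝ) : x ^ 2 ≤ sinh x ^ 2 := by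
  rw [← sq_abs, ← sq_abs (sinh x), abs_sinh]
  gcongr
  exact self_le_sinh_iff.mpr (abs_nonneg x)

theorem abs_sin_abs (x : ℝ) : |sin (|x|)| = |sin x| := by
  rcases abs_choice x with h | h <;> rw [h]
  rw [sin_neg, abs_neg]

theorem two_mul_abs_sub_le_abs_sin_pi_mul {x : ℝ} {n : ℤ} (h : |x - n| ≤ 1 / 2) :
    2 * |x - n| ≤ |sin (π * x)| := by
  have hshift : π * x = π * (x - n) + n * π := by ring
  have hjordan := mul_abs_le_abs_sin (x := π * (x - n)) (by
    rw [abs_mul, abs_of_pos pi_pos]; linarith [mul_le_mul_of_nonneg_left h pi_pos.le])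
  rw [abs_mul, abs_of_pos pi_pos, ← mul_assoc, div_mul_cancel₀ _ pi_ne_zero] at hjordan
  rwa [hshift, sin_add_int_mul_pi, abs_mul, abs_neg_one_zpow, one_mul]

theorem one_le_five_mul_sin_sq_add_three_mul_sinh_sq {m : ℕ} {x y : ℝ}
    (h : x ^ 2 + y ^ 2 = ((m : ℝ) + 1 / 2) ^ 2) :
    1 ≤ 5 * sin (π * x) ^ 2 + 3 * sinh (π * y) ^ 2 := by
  rcases le_or_gt (1 / 4) |y| with hy | hy
  · have hπy : 9 / 16 ≤ (π * y) ^ 2 := by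
      calc (9 / 16 : ℝ) = 3 ^ 2 * (1 / 4) ^ 2 := by norm_num
        _ ≤ π ^ 2 * |y| ^ 2 := by gcongr; exact pi_gt_three.le
        _ = (π * y) ^ 2 := by rw [mul_pow, sq_abs]
    nlinarith [sq_le_sinh_sq (π * y), sq_nonneg (sin (π * x))]
  · have hy2 : y ^ 2 < 1 / 16 := by nlinarith [sq_abs y, abs_nonneg y]
    have hlow : (m : ℝ) + 1 / 4 ≤ |x| := by
      rw [← pow_le_pow_iff_left₀ (by positivity) (abs_nonneg x) two_ne_zero, sq_abs]
      nlinarith [(Nat.cast_nonneg m : (0 : ℝ) ≤ m)]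
    have hup : |x| ≤ (m : ℝ) + 1 / 2 := by
      rw [← pow_le_pow_iff_left₀ (abs_nonneg x) (by positivity) two_ne_zero, sq_abs]
      nlinarith [sq_nonneg y]
    have hsin := two_mul_abs_sub_le_abs_sin_pi_mul (x := |x|) (n := m) (by
      rw [Int.cast_natCast, abs_of_nonneg (by linarith)]; linarith)
    rw [Int.cast_natCast, abs_of_nonneg (by linarith), ← abs_of_pos pi_pos, ← abs_mul,
      abs_sin_abs] at hsin
    have hsq := pow_le_pow_left₀ (by linarith) hsin 2
    rw [sq_abs] at hsq
    nlinarith [sq_nonneg (sinh (π * y))]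

end Real

/-- On every circle `|z| = m + 1/2` with `m ∈ ℕ`, one has `|cos(πz)| ≤ 2·|sin(πz)|`. -/
theorem cot_bound_on_half_integer_circles (m : ℕ) (z : ℂ)
    (hz : ‖z‖ = (m : ℝ) + 1 / 2) :
    ‖Complex.cos (↑Real.pi * z)‖ ≤
      2 * ‖Complex.sin (↑Real.pi * z)‖ := by
  have hcircle : z.re ^ 2 + z.im ^ 2 = ((m : ℝ) + 1 / 2) ^ 2 := by
    rw [← hz, Complex.sq_norm, Complex.normSq_apply]; ring
  rw [Complex.norm_cos_le_two_mul_norm_sin_iff, Complex.re_ofReal_mul, Complex.im_ofReal_mul]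
  exact one_le_five_mul_sin_sq_add_three_mul_sinh_sq hcircle
end

section
/- For any γ₋, γ₊ ∈ ℂ, the analytic order of vanishing of w at q = 0 equals 1 if and only if γ₋γ₊ ≠ i(γ₋ + γ₊); and if γ₋γ₊ = i(γ₋ + γ₊), then the analytic order of vanishing of w at q = 0 is at least 3. -/
/-- The entire function whose zeros are the solutions of the transcendental
eigenvalue condition. -/
noncomputable def w (γm γp : ℂ) (q : ℂ) : ℂ :=
  ((↑Real.pi * q) ^ 2 + γm * γp) * Complex.sin (↑Real.pi * q)
    - Complex.I * (γm + γp) * (↑Real.pi * q) * Complex.cos (↑Real.pi * q)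

lemma w_differentiable (γm γp : ℂ) : Differentiable ℂ (w γm γp) := by
  unfold w; fun_prop

/-- The analytic order of vanishing of `w γm γp` at `q`. -/
noncomputable def wOrder (γm γp q : ℂ) : ℕ∞ :=
  analyticOrderAt (w γm γp) q

/-!
`w` is odd, so its even-order derivatives vanish at `0`; everything is therefore decided by
`w'(0) = π(γ₋γ₊ - i(γ₋ + γ₊))`.
-/

theorem Function.Odd.iteratedDeriv_eq_zero_of_even {𝕜 F : Type*} [NontriviallyNormedField 𝕜]
    [NormedAddCommGroup F] [NormedSpace 𝕜 F] [IsAddTorsionFree F] {f : 𝕜 → F} (hf : f.Odd)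
    {n : ℕ} (hn : Even n) : iteratedDeriv n f 0 = 0 := by
  have h := iteratedDeriv_comp_neg n f 0
  simp only [hf _, iteratedDeriv_fun_neg, hn.neg_one_pow, one_smul, neg_zero] at h
  exact self_eq_neg.mp h.symm

open Complex

lemma w_odd (γm γp : ℂ) : (w γm γp).Odd := fun q => by
  simp only [w, mul_neg, sin_neg, cos_neg]
  ring

lemma hasDerivAt_w_zero (γm γp : ℂ) :
    HasDerivAt (w γm γp) (Real.pi * (γm * γp - I * (γm + γp))) 0 := by
  have hlin : HasDerivAt (fun q : ℂ => (Real.pi : ℂ) * q) Real.pi 0 := by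
    simpa using (hasDerivAt_id (0 : ℂ)).const_mul (Real.pi : ℂ)
  have h := (((hlin.fun_pow 2).add_const (γm * γp)).mul ((hasDerivAt_sin _).comp 0 hlin)).sub
    ((hlin.const_mul (I * (γm + γp))).mul ((hasDerivAt_cos _).comp 0 hlin))
  refine (h.congr_deriv ?_).congr_of_eventuallyEq (.of_forall fun q => ?_)
  · simp only [Function.comp_apply, Nat.cast_ofNat, Nat.add_one_sub_one, pow_one, ne_eq,
      OfNat.ofNat_ne_zero, not_false_eq_true, zero_pow, mul_zero, zero_mul, sin_zero, cos_zero,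
      neg_zero, zero_add, add_zero, one_mul, mul_one]
    ring
  · simp [w, mul_assoc]

lemma wOrder_zero_eq_one {γm γp : ℂ} (h : γm * γp ≠ I * (γm + γp)) : wOrder γm γp 0 = 1 := by
  refine ((w_differentiable γm γp).analyticAt 0).analyticOrderAt_eq_one_of_zero_deriv_ne_zero
    (w_odd γm γp).map_zero ?_
  rw [(hasDerivAt_w_zero γm γp).deriv]
  exact mul_ne_zero (ofReal_ne_zero.mpr Real.pi_ne_zero) (sub_ne_zero.mpr h)

lemma three_le_wOrder_zero {γm γp : ℂ} (h : γm * γp = I * (γm + γp)) : 3 ≤ wOrder γm γp 0 := by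
  rw [wOrder, ← Nat.cast_ofNat,
    natCast_le_analyticOrderAt_iff_iteratedDeriv_eq_zero ((w_differentiable γm γp).analyticAt 0)]
  intro i hi
  rcases Nat.even_or_odd i with heven | hodd
  · exact (w_odd γm γp).iteratedDeriv_eq_zero_of_even heven
  · obtain rfl : i = 1 := by
      obtain ⟨k, rfl⟩ := hodd
      omega
    rw [iteratedDeriv_one, (hasDerivAt_w_zero γm γp).deriv, h, sub_self, mul_zero]

/-- The order of vanishing of `w` at `0` is `1` iff `γ₋γ₊ ≠ i(γ₋ + γ₊)`; and if
`γ₋γ₊ = i(γ₋ + γ₊)` then that order is at least `3`. -/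
theorem w_order_at_zero (γm γp : ℂ) :
    (wOrder γm γp 0 = 1 ↔ γm * γp ≠ Complex.I * (γm + γp)) ∧
    (γm * γp = Complex.I * (γm + γp) → 3 ≤ wOrder γm γp 0) := by
  refine ⟨⟨fun horder h => ?_, wOrder_zero_eq_one⟩, three_le_wOrder_zero⟩
  have := three_le_wOrder_zero h
  rw [horder] at this
  exact absurd this (by decide)
end

section
/- Let l > 0 be real and q, b, γ₋, γ₊ ∈ ℂ, and let φ : ℝ → ℂ be given by φ(x) = cos((π/l)·q·x + b). If φ satisfies the impedance boundary conditions −φ'(−l/2) + i·(γ₋/l)·φ(−l/2) = 0 at the left wall and φ'(l/2) + i·(γ₊/l)·φ(l/2) = 0 at the right wall, then ((πq)² + γ₋γ₊)·sin(πq) = i(γ₋ + γ₊)·(πq)·cos(πq). -/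
/-!
With `u = b - πq/2` and `v = b + πq/2` the phases of `φ` at the two walls, the boundary conditions
say that `(sin u, cos u)` and `(sin v, cos v)` are annihilated by `(πq, iγ₋)` and `(-πq, iγ₊)`.
Expanding `sin (v - u)` and `cos (v - u)` turns the eigenvalue condition into a combination of these
two relations, since `v - u = πq`.
-/

open Complex

theorem hasDerivAt_cos_mul_add (a b : ℂ) (x : ℝ) :
    HasDerivAt (fun t : ℝ => cos (a * t + b)) (-sin (a * x + b) * a) x := by
  simpa using (((hasDerivAt_id (x : ℂ)).const_mul a).add_const b).ccos.comp_ofReal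

theorem sin_cos_sub_eq_of_impedance_relations {u v γm γp : ℂ}
    (hu : (v - u) * sin u + I * γm * cos u = 0)
    (hv : -(v - u) * sin v + I * γp * cos v = 0) :
    ((v - u) ^ 2 + γm * γp) * sin (v - u) = I * (γm + γp) * (v - u) * cos (v - u) := by
  rw [sin_sub, cos_sub]
  linear_combination (-((v - u) * cos v + I * γp * sin v)) * hu +
    (I * γm * sin u - (v - u) * cos u) * hv +
    γm * γp * (sin v * cos u - cos v * sin u) * I_sq

/-- If `φ(x) = cos((π/l)·q·x + b)` satisfies the impedance boundary conditions at
both walls of the interval `[−l/2, l/2]`, then the transcendental eigenvalue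
condition `((πq)² + γ₋γ₊)·sin(πq) = i(γ₋ + γ₊)·(πq)·cos(πq)` holds. -/
theorem impedance_bc_implies_eigenvalue_condition
    (l : ℝ) (hl : 0 < l) (q b γm γp : ℂ)
    (φ : ℝ → ℂ) (hφ : ∀ x : ℝ, φ x = Complex.cos ((↑Real.pi / ↑l) * q * ↑x + b))
    (hleft : -deriv φ (-(l / 2)) + Complex.I * (γm / ↑l) * φ (-(l / 2)) = 0)
    (hright : deriv φ (l / 2) + Complex.I * (γp / ↑l) * φ (l / 2) = 0) :
    ((↑Real.pi * q) ^ 2 + γm * γp) * Complex.sin (↑Real.pi * q) =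
      Complex.I * (γm + γp) * (↑Real.pi * q) * Complex.cos (↑Real.pi * q) := by
  have hl0 : (l : ℂ) ≠ 0 := by exact_mod_cast hl.ne'
  have hderiv (x : ℝ) : deriv φ x = -sin (↑Real.pi / ↑l * q * x + b) * (↑Real.pi / ↑l * q) := by
    rw [funext hφ]
    exact (hasDerivAt_cos_mul_add _ b x).deriv
  set u := b - ↑Real.pi * q / 2
  set v := b + ↑Real.pi * q / 2
  have hleft_phase : ↑Real.pi / ↑l * q * ((-(l / 2) : ℝ) : ℂ) + b = u := by
    push_cast; field_simp; ring
  have hright_phase : ↑Real.pi / ↑l * q * ((l / 2 : ℝ) : ℂ) + b = v := by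
    push_cast; field_simp; ring
  have hpq : ↑Real.pi * q = v - u := by ring
  rw [hderiv, hφ, hleft_phase] at hleft
  rw [hderiv, hφ, hright_phase] at hright
  rw [hpq]
  apply sin_cos_sub_eq_of_impedance_relations
  · rw [← hpq]
    field_simp at hleft
    linear_combination hleft
  · rw [← hpq]
    field_simp at hright
    linear_combination hright
end
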